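/- Validity does not imply violation: there exists a model M and formula φ such that φ holds at every state of M (M ⊨ φ), yet none of Viol^a_{i,a}(t_b, t_v, φ), Viol^o_{i,a}(t_b, t_v, φ), the repaired-violation RViol_{i,a}(t_b, t_v, t_r, φ), nor the punished-violation PViol_{i,a}(t_b, t_v, t_p, φ) holds at any state. In particular, the violation modalities do not satisfy the necessitation rule. -/

import Mathlib

open scoped Classical

/-- Tree-shaped Kripke model for a fixed norm `i` and agent `a`, as in
"Linking sanctions to norms in practice".  `V`, `D`, `Rep`, `Pun` are the
violation / deadline / repair / punishment markers `V_{i,a}`, `D_{i,a}`,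
`R_{i,a}`, `P_{i,a}`; `Ra` are the transitions labelled with agent `a`. -/
structure NormModel where
  W : Type
  root : W
  R : W → W → Prop
  Ra : W → W → Prop
  hRa : ∀ s s', Ra s s' → R s s'
  depth : W → ℕ
  hroot : depth root = 0
  hdepth : ∀ s s', R s s' → depth s' = depth s + 1
  predUnique : ∀ s' s₁ s₂, R s₁ s' → R s₂ s' → s₁ = s₂
  reach : ∀ s, Relation.ReflTransGen R root s
  V : W → Prop
  D : W → Prop
  Rep : W → Prop
  Pun : W → Prop

namespace NormModel

/-- A path: an infinite `R`-sequence starting at the root. -/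
def IsPath (M : NormModel) (σ : ℕ → M.W) : Prop :=
  σ 0 = M.root ∧ ∀ n, M.R (σ n) (σ (n + 1))

/-- Paths through a state `s`. -/
def PathThrough (M : NormModel) (σ : ℕ → M.W) (s : M.W) : Prop :=
  M.IsPath σ ∧ σ (M.depth s) = s

/-- STIT operator `E_a φ`: `φ` holds at all `a`-successors, and `φ` is not
globally true (the non-triviality condition `M, w ⊨ ¬AG⁺φ`). -/
def Ea (M : NormModel) (φ : M.W → Prop) (s : M.W) : Prop :=
  (∀ s', M.Ra s s' → φ s') ∧ ¬ (∀ s', φ s')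

/-- Act-violation `Viol^a_{i,a}(t_b, t_v, φ)` at `s`:
(1) on all paths through `s` there is a past-or-current state at depth `t_v`
satisfying `V_{i,a}` whose predecessor satisfies `E_a φ`, and
(2) at all past states with depth in `[t_b, t_v]`, `φ → V_{i,a}`. -/
def ViolA (M : NormModel) (tb tv : ℕ) (φ : M.W → Prop) (s : M.W) : Prop :=
  1 ≤ tv ∧ tv ≤ M.depth s ∧
  (∀ σ, M.PathThrough σ s → M.V (σ tv) ∧ M.Ea φ (σ (tv - 1))) ∧
  (∀ σ, M.PathThrough σ s → ∀ t, tb ≤ t → t ≤ tv → φ (σ t) → M.V (σ t))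

/-- The common body of the omission-violation conditions, parametrised by the
"fulfilment or fresh violation" clause used in the counting condition (4). -/
def ViolOBody (M : NormModel) (tb tv : ℕ) (φ : M.W → Prop) (s : M.W)
    (fresh : ℕ → (ℕ → M.W) → Prop) : Prop :=
  tv ≤ M.depth s ∧
  (∀ σ, M.PathThrough σ s → M.V (σ tv) ∧ M.D (σ tv)) ∧
  (∀ σ, M.PathThrough σ s → ∀ t, tb ≤ t → t ≤ tv → M.V (σ t) → ¬ φ (σ t)) ∧
  (∀ σ, M.PathThrough σ s → ∃ u, tb ≤ u ∧ u ≤ M.depth s ∧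
    (M.D (σ u) ∨ u = tb) ∧
    ∀ t, u < t → t ≤ M.depth s → ¬ M.Ea φ (σ t) ∧ ¬ M.D (σ t)) ∧
  (∀ σ, M.PathThrough σ s →
    ((Finset.Icc tb tv).filter (fun t => M.D (σ t))).card >
    ((Finset.Icc tb tv).filter (fun t => fresh t σ)).card)

/-- Auxiliary, fuel-indexed version of the omission-violation modality.
Since fresh omission-violations counted in condition (4) happen at strictly
smaller times, fuel `tv` suffices, and `ViolOAux tb φ tv tv s` is exactly the
intended fixed point. -/
def ViolOAux (M : NormModel) (tb : ℕ) (φ : M.W → Prop) : ℕ → ℕ → M.W → Prop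
  | 0, tv, s => M.ViolOBody tb tv φ s (fun t σ => M.Ea φ (σ t))
  | fuel + 1, tv, s => M.ViolOBody tb tv φ s
      (fun t σ => M.Ea φ (σ t) ∨ (t < tv ∧ M.ViolOAux tb φ fuel t (σ t)))

/-- Omission-violation `Viol^o_{i,a}(t_b, t_v, φ)` at `s`:
(1) a past-or-current `V ∧ D` state at depth `t_v` on all paths,
(2) `V_{i,a} → ¬φ` on `[t_b, t_v]`,
(3) `¬E_a φ ∧ ¬D_{i,a}` backwards until the last deadline or `t_b`,
(4) on each path, deadlines on `[t_b, t_v]` strictly outnumber states with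
`E_a φ` or a fresh omission-violation of `φ`. -/
def ViolO (M : NormModel) (tb tv : ℕ) (φ : M.W → Prop) (s : M.W) : Prop :=
  M.ViolOAux tb φ tv tv s

/-- A violation in general: by acting or by omission. -/
def Viol (M : NormModel) (tb tv : ℕ) (φ : M.W → Prop) (s : M.W) : Prop :=
  M.ViolA tb tv φ s ∨ M.ViolO tb tv φ s

/-- Repaired violation `RViol_{i,a}(t_b, t_v, t_r, φ)`. -/
def RViol (M : NormModel) (tb tv tr : ℕ) (φ : M.W → Prop) (s : M.W) : Prop :=
  M.Viol tb tv φ s ∧ tv ≤ tr ∧ tr ≤ M.depth s ∧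
  (∀ σ, M.PathThrough σ s → M.Ea M.Rep (σ tr)) ∧
  (∀ σ, M.PathThrough σ s →
    ((Finset.Icc tv tr).filter (fun t => M.Ea M.Rep (σ t))).card ≥
    ((Finset.Icc tb tv).filter (fun t => M.Viol tb t φ (σ t))).card)

/-- Punished violation `PViol_{i,a}(t_b, t_v, t_p, φ)`. -/
def PViol (M : NormModel) (tb tv tp : ℕ) (φ : M.W → Prop) (s : M.W) : Prop :=
  M.Viol tb tv φ s ∧ tv ≤ tp ∧ tp ≤ M.depth s ∧
  (∀ σ, M.PathThrough σ s → M.Ea M.Pun (σ tp)) ∧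
  (∀ σ, M.PathThrough σ s →
    ((Finset.Icc tv tp).filter (fun t => M.Ea M.Pun (σ t))).card ≥
    ((Finset.Icc tb tv).filter (fun t => M.Viol tb t φ (σ t))).card)

/-- Prohibition `F_{i,a}(t_b, φ)` at `s`: if the agent sees to it that `φ`,
then every successor state carries a fresh act-violation. -/
def Forb (M : NormModel) (tb : ℕ) (φ : M.W → Prop) (s : M.W) : Prop :=
  M.Ea φ s → ∀ s', M.R s s' → M.ViolA tb (M.depth s') φ s'

end NormModel

/-!
The non-triviality clause of `E_a` makes `E_a φ` false everywhere when `φ` is valid. Act-violations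
need such an `E_a φ` state, and omission-violations need a `V` state in `[t_b, t_v]`, where
`V → ¬φ` is impossible. Repaired and punished violations contain a violation. These arguments read
the clauses off a path through the state, so the model must have one through every state: the
infinite chain `0 → 1 → 2 → ⋯` does.
-/

namespace NormModel

section Valid

variable {M : NormModel} {φ : M.W → Prop}

theorem not_ea_of_forall (hφ : ∀ s, φ s) (s : M.W) : ¬ M.Ea φ s :=
  fun h => h.2 hφ

variable {σ : ℕ → M.W} {s : M.W}

theorem not_violA_of_forall (hφ : ∀ s, φ s) (hσ : M.PathThrough σ s) (tb tv : ℕ) :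
    ¬ M.ViolA tb tv φ s :=
  fun ⟨_, _, hV, _⟩ => not_ea_of_forall hφ _ (hV σ hσ).2

/-- The counting condition forces `tb ≤ tv`, and then `V → ¬φ` at `tv` contradicts `φ` being valid. -/
theorem not_violOBody_of_forall (hφ : ∀ s, φ s) (hσ : M.PathThrough σ s) (tb tv : ℕ)
    (fresh : ℕ → (ℕ → M.W) → Prop) : ¬ M.ViolOBody tb tv φ s fresh := by
  rintro ⟨-, hVD, hVnot, -, hcount⟩
  have htb : tb ≤ tv := by
    by_contra! h
    simpa [Finset.Icc_eq_empty_of_lt h] using hcount σ hσ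
  exact hVnot σ hσ tv htb le_rfl (hVD σ hσ).1 (hφ _)

theorem not_violOAux_of_forall (hφ : ∀ s, φ s) (hσ : M.PathThrough σ s) (tb fuel tv : ℕ) :
    ¬ M.ViolOAux tb φ fuel tv s := by
  cases fuel <;> exact not_violOBody_of_forall hφ hσ tb tv _

theorem not_viol_of_forall (hφ : ∀ s, φ s) (hσ : M.PathThrough σ s) (tb tv : ℕ) :
    ¬ M.Viol tb tv φ s := by
  rintro (h | h)
  · exact not_violA_of_forall hφ hσ tb tv h
  · exact not_violOAux_of_forall hφ hσ tb tv tv h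

end Valid

def chain : NormModel where
  W := ℕ
  root := 0
  R m n := n = m + 1
  Ra m n := n = m + 1
  hRa _ _ h := h
  depth := id
  hroot := rfl
  hdepth _ _ h := h
  predUnique _ _ _ h₁ h₂ := h₁.symm.trans h₂ |> Nat.succ_injective
  reach s := by
    induction s with
    | zero => exact .refl
    | succ n ih => exact ih.tail rfl
  V _ := False
  D _ := False
  Rep _ := False
  Pun _ := False

theorem chain_pathThrough_id (s : ℕ) : chain.PathThrough id s :=
  ⟨⟨rfl, fun _ => rfl⟩, rfl⟩

end NormModel

open NormModel

/-- validity does not imply violation — there is a model and a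
formula true at every state for which none of the four violation modalities
holds at any state, for any choice of time parameters.  Hence the violation
modalities do not satisfy necessitation. -/
theorem necessitation_fails :
    ∃ (M : NormModel) (φ : M.W → Prop),
      (∀ s, φ s) ∧
      ∀ (tb tv tr tp : ℕ) (s : M.W),
        ¬ M.ViolA tb tv φ s ∧ ¬ M.ViolO tb tv φ s ∧
        ¬ M.RViol tb tv tr φ s ∧ ¬ M.PViol tb tv tp φ s := by
  have hφ : ∀ s : chain.W, (fun _ => True) s := fun _ => trivial
  refine ⟨chain, fun _ => True, hφ, fun tb tv _ _ s => ?_⟩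
  have hσ := chain_pathThrough_id s
  exact ⟨not_violA_of_forall hφ hσ tb tv, not_violOAux_of_forall hφ hσ tb tv tv,
    fun h => not_viol_of_forall hφ hσ tb tv h.1, fun h => not_viol_of_forall hφ hσ tb tv h.1⟩
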